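/- For strongly consistently connected systems, CbD-noncontextuality specializes to noncontextuality in the sense of reduced couplings: an s.c.c. system admits a multimaximally connected coupling if and only if there exists a probability measure S on Π_{q∈Q} V_q whose marginal on the coordinates {q : q ≺ c} equals μ_c for every context c. Moreover, in an s.c.c. system the maximal equality probability m(q,c,c') equals 1 for every content q and all contexts c, c' with q ≺ c and q ≺ c', so a coupling is multimaximally connected exactly when, almost surely, the (q,c)-coordinate equals the (q,c')-coordinate for all such q, c, c'. -/

import Mathlib

open Finset

/-- A probability distribution on a finite type, given by a real-valued mass function:
nonnegative and summing to one. -/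
def IsDist {α : Type} [Fintype α] (d : α → ℝ) : Prop :=
  (∀ a, 0 ≤ d a) ∧ ∑ a, d a = 1

/-- The pushforward (marginal) of a mass function along a map. -/
def margin {α β : Type} [Fintype α] [DecidableEq β] (d : α → ℝ) (f : α → β) : β → ℝ :=
  fun b => ∑ a ∈ univ.filter (fun a => f a = b), d a

/-- `γ` is a coupling of the system `(μ c)_{c ∈ C}`: a probability measure on the product
over all pairs `(q, c)` with `q ≺ c` of `V q`, whose marginal on the coordinates of each
context `c` equals `μ c`. -/
def IsCoupling {Q C : Type} [Fintype Q] [DecidableEq Q] [Fintype C] [DecidableEq C]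
    (mea : Q → C → Bool) (V : Q → Type) [∀ q, Fintype (V q)] [∀ q, DecidableEq (V q)]
    (μ : ∀ c : C, (∀ q : {q : Q // mea q c}, V q.1) → ℝ)
    (γ : (∀ p : {p : Q × C // mea p.1 p.2}, V p.1.1) → ℝ) : Prop :=
  IsDist γ ∧
  ∀ c : C, margin γ (fun x (q : {q : Q // mea q c}) => x ⟨(q.1, c), q.2⟩) = μ c

/-- `γ` is multimaximally connected: for every content `q` and contexts `c, c'` in which
`q` is measured, the `γ`-probability that the `(q, c)`-coordinate equals the
`(q, c')`-coordinate is the greatest diagonal probability over all couplings of the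
`q`-marginal of `μ c` with the `q`-marginal of `μ c'`. -/
def IsMultimaximal {Q C : Type} [Fintype Q] [DecidableEq Q] [Fintype C] [DecidableEq C]
    (mea : Q → C → Bool) (V : Q → Type) [∀ q, Fintype (V q)] [∀ q, DecidableEq (V q)]
    (μ : ∀ c : C, (∀ q : {q : Q // mea q c}, V q.1) → ℝ)
    (γ : (∀ p : {p : Q × C // mea p.1 p.2}, V p.1.1) → ℝ) : Prop :=
  ∀ (q : Q) (c c' : C) (h : mea q c) (h' : mea q c'),
    IsGreatest
      {r : ℝ | ∃ ν : V q × V q → ℝ, IsDist ν ∧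
          margin ν Prod.fst = margin (μ c) (fun x => x ⟨q, h⟩) ∧
          margin ν Prod.snd = margin (μ c') (fun x => x ⟨q, h'⟩) ∧
          r = ∑ v : V q, ν (v, v)}
      (∑ x ∈ univ.filter
          (fun x : ∀ p : {p : Q × C // mea p.1 p.2}, V p.1.1 =>
            x ⟨(q, c), h⟩ = x ⟨(q, c'), h'⟩), γ x)

/-- A system is CbD-noncontextual if it has a multimaximally connected coupling. -/
def CbDNoncontextual {Q C : Type} [Fintype Q] [DecidableEq Q] [Fintype C] [DecidableEq C]
    (mea : Q → C → Bool) (V : Q → Type) [∀ q, Fintype (V q)] [∀ q, DecidableEq (V q)]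
    (μ : ∀ c : C, (∀ q : {q : Q // mea q c}, V q.1) → ℝ) : Prop :=
  ∃ γ, IsCoupling mea V μ γ ∧ IsMultimaximal mea V μ γ

/-!
In an s.c.c. system all contexts measuring a content `q` give it the same distribution, and the
diagonal coupling of a distribution with itself makes the two copies equal with probability `1`.
So `m(q, c, c') = 1`, and a coupling is multimaximal exactly when it is supported on assignments
in which all copies `(q, c)` of a content agree. Such assignments are the same thing as points of
`Π q, V q`: copying each content to all its contexts pushes a reduced coupling `S` forward to a
multimaximal coupling, and reading each content off one fixed context pushes a multimaximal
coupling forward to a reduced one.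
-/

section Margin

variable {α β δ : Type} [Fintype α]

lemma IsDist.margin [Fintype β] [DecidableEq β] {d : α → ℝ} (hd : IsDist d) (f : α → β) :
    IsDist (margin d f) :=
  ⟨fun _ => sum_nonneg fun a _ => hd.1 a,
    (sum_fiberwise_of_maps_to (fun a _ => mem_univ (f a)) d).trans hd.2⟩

lemma margin_margin [Fintype β] [DecidableEq β] [DecidableEq δ] (d : α → ℝ) (f : α → β)
    (g : β → δ) : margin (margin d f) g = margin d (g ∘ f) := by
  funext c
  unfold margin
  rw [sum_fiberwise_eq_sum_filter]
  congr 1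
  ext a
  simp

lemma margin_congr_of_ne_zero [DecidableEq β] {d : α → ℝ} {f g : α → β}
    (h : ∀ a, d a ≠ 0 → f a = g a) : margin d f = margin d g := by
  funext b
  unfold margin
  rw [sum_filter, sum_filter]
  refine sum_congr rfl fun a _ => ?_
  by_cases hd : d a = 0
  · simp [hd]
  · rw [h a hd]

lemma exists_eq_of_margin_ne_zero [DecidableEq β] {d : α → ℝ} {f : α → β} {b : β}
    (h : margin d f b ≠ 0) : ∃ a, f a = b := by
  by_contra! hb
  exact h (sum_eq_zero fun a ha => absurd (mem_filter.mp ha).2 (hb a))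

lemma IsDist.sum_filter_eq_one_iff {d : α → ℝ} (hd : IsDist d) (P : α → Prop)
    [DecidablePred P] : ∑ a ∈ univ.filter P, d a = 1 ↔ ∀ a, d a ≠ 0 → P a := by
  have hsplit : ∑ a ∈ univ.filter P, d a + ∑ a ∈ univ.filter (fun a => ¬ P a), d a = 1 := by
    rw [sum_filter_add_sum_filter_not]; exact hd.2
  calc ∑ a ∈ univ.filter P, d a = 1 ↔ ∑ a ∈ univ.filter (fun a => ¬ P a), d a = 0 := by
        constructor <;> intro <;> linarith
    _ ↔ ∀ a, d a ≠ 0 → P a := by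
        rw [sum_eq_zero_iff_of_nonneg fun a _ => hd.1 a]
        simp only [mem_filter, mem_univ, true_and]
        exact forall_congr' fun a => not_imp_comm

end Margin

lemma isGreatest_diagonal_mass_one {β : Type} [Fintype β] [DecidableEq β] {d : β → ℝ}
    (hd : IsDist d) :
    IsGreatest {r : ℝ | ∃ ν : β × β → ℝ, IsDist ν ∧
        margin ν Prod.fst = d ∧ margin ν Prod.snd = d ∧
        r = ∑ v : β, ν (v, v)} 1 := by
  constructor
  · refine ⟨fun p => if p.1 = p.2 then d p.1 else 0,
      ⟨fun p => by dsimp only; split <;> simp [hd.1], ?_⟩, ?_, ?_, ?_⟩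
    · simp [Fintype.sum_prod_type, hd.2]
    · funext v
      simp [margin, sum_filter, Fintype.sum_prod_type]
    · funext v
      simp [margin, sum_filter, Fintype.sum_prod_type]
    · simp [hd.2]
  · rintro r ⟨ν, hν, -, -, rfl⟩
    calc ∑ v : β, ν (v, v) ≤ ∑ p : β × β, ν p := by
          rw [Fintype.sum_prod_type]
          exact sum_le_sum fun v _ => single_le_sum (fun w _ => hν.1 (v, w)) (mem_univ v)
      _ = 1 := hν.2

section System

variable {Q C : Type} [Fintype Q] [DecidableEq Q]
  {mea : Q → C → Bool} {V : Q → Type} [∀ q, Fintype (V q)] [∀ q, DecidableEq (V q)]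
  {μ : ∀ c : C, (∀ q : {q : Q // mea q c}, V q.1) → ℝ}

variable (mea V μ) in
def StronglyConsistentlyConnected : Prop :=
  ∀ (Q' : Finset Q) (c c' : C) (h : ∀ q ∈ Q', mea q c) (h' : ∀ q ∈ Q', mea q c'),
    margin (μ c) (fun x (q : {q : Q // q ∈ Q'}) => x ⟨q.1, h q.1 q.2⟩)
      = margin (μ c') (fun x (q : {q : Q // q ∈ Q'}) => x ⟨q.1, h' q.1 q.2⟩)

variable (mea V μ) in
def IsReducedCoupling (S : (∀ q : Q, V q) → ℝ) : Prop :=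
  IsDist S ∧ ∀ c : C, margin S (fun x (q : {q : Q // mea q c}) => x q.1) = μ c

variable (mea V) in
def copyContents (y : ∀ q, V q) : ∀ p : {p : Q × C // mea p.1 p.2}, V p.1.1 :=
  fun p => y p.1.1

open Classical in
variable (mea V) in
noncomputable def readContents [∀ q, Nonempty (V q)]
    (x : ∀ p : {p : Q × C // mea p.1 p.2}, V p.1.1) : ∀ q, V q :=
  fun q => if hq : ∃ c, mea q c then x ⟨(q, hq.choose), hq.choose_spec⟩
    else Classical.arbitrary _

lemma StronglyConsistentlyConnected.margin_eval_eq (hscc : StronglyConsistentlyConnected mea V μ)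
    {q : Q} {c c' : C} (h : mea q c) (h' : mea q c') :
    margin (μ c) (fun x => x ⟨q, h⟩) = margin (μ c') (fun x => x ⟨q, h'⟩) := by
  have hq : ∀ q' ∈ ({q} : Finset Q), mea q' c := by simpa using h
  have hq' : ∀ q' ∈ ({q} : Finset Q), mea q' c' := by simpa using h'
  have key := congrArg (margin · (fun y => y ⟨q, mem_singleton_self q⟩)) (hscc {q} c c' hq hq')
  rw [margin_margin, margin_margin] at key
  exact key

lemma StronglyConsistentlyConnected.isGreatest_diagonal_mass
    (hdist : ∀ c, IsDist (μ c)) (hscc : StronglyConsistentlyConnected mea V μ)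
    {q : Q} {c c' : C} (h : mea q c) (h' : mea q c') :
    IsGreatest
      {r : ℝ | ∃ ν : V q × V q → ℝ, IsDist ν ∧
          margin ν Prod.fst = margin (μ c) (fun x => x ⟨q, h⟩) ∧
          margin ν Prod.snd = margin (μ c') (fun x => x ⟨q, h'⟩) ∧
          r = ∑ v : V q, ν (v, v)} 1 := by
  rw [← hscc.margin_eval_eq h h']
  exact isGreatest_diagonal_mass_one ((hdist c).margin _)

variable [Fintype C] [DecidableEq C]

lemma StronglyConsistentlyConnected.isMultimaximal_iff
    (hdist : ∀ c, IsDist (μ c)) (hscc : StronglyConsistentlyConnected mea V μ)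
    {γ : (∀ p : {p : Q × C // mea p.1 p.2}, V p.1.1) → ℝ} (hγ : IsDist γ) :
    IsMultimaximal mea V μ γ ↔
      ∀ x, γ x ≠ 0 → ∀ (q : Q) (c c' : C) (h : mea q c) (h' : mea q c'),
        x ⟨(q, c), h⟩ = x ⟨(q, c'), h'⟩ := by
  constructor
  · intro hm x hx q c c' h h'
    have hone := (hm q c c' h h').unique (hscc.isGreatest_diagonal_mass hdist h h')
    exact (hγ.sum_filter_eq_one_iff _).mp hone x hx
  · intro hs q c c' h h'
    rw [(hγ.sum_filter_eq_one_iff _).mpr fun x hx => hs x hx q c c' h h']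
    exact hscc.isGreatest_diagonal_mass hdist h h'

lemma IsReducedCoupling.isCoupling_margin_copyContents {S : (∀ q : Q, V q) → ℝ}
    (hS : IsReducedCoupling mea V μ S) : IsCoupling mea V μ (margin S (copyContents mea V)) :=
  ⟨hS.1.margin _, fun c => (margin_margin _ _ _).trans (hS.2 c)⟩

lemma IsCoupling.isReducedCoupling_margin_readContents [∀ q, Nonempty (V q)]
    {γ : (∀ p : {p : Q × C // mea p.1 p.2}, V p.1.1) → ℝ} (hγ : IsCoupling mea V μ γ)
    (hdiag : ∀ x, γ x ≠ 0 → ∀ (q : Q) (c c' : C) (h : mea q c) (h' : mea q c'),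
      x ⟨(q, c), h⟩ = x ⟨(q, c'), h'⟩) :
    IsReducedCoupling mea V μ (margin γ (readContents mea V)) := by
  refine ⟨hγ.1.margin _, fun c => ?_⟩
  rw [margin_margin, ← hγ.2 c]
  refine margin_congr_of_ne_zero fun x hx => funext fun q => ?_
  have hq : ∃ c₀, mea q.1 c₀ := ⟨c, q.2⟩
  simpa only [Function.comp_apply, readContents, dif_pos hq] using
    hdiag x hx q.1 hq.choose c hq.choose_spec q.2

end System

/-- For strongly consistently connected systems, CbD-noncontextuality specializes to
noncontextuality in the sense of reduced couplings. For an s.c.c. system: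
(1) there is a multimaximally connected coupling iff there is a probability measure `S`
on `Π_{q ∈ Q} V q` whose marginal on the contents measured in each context `c` is `μ c`;
(2) the maximal equality probability `m(q, c, c')` equals `1` for every content `q` and
all contexts `c, c'` measuring `q`; and
(3) a coupling is multimaximally connected exactly when, almost surely, its
`(q, c)`-coordinate equals its `(q, c')`-coordinate for all such `q, c, c'`. -/
theorem scc_cbd_specializes_to_reduced_coupling
    {Q C : Type} [Fintype Q] [DecidableEq Q] [Fintype C] [DecidableEq C]
    (mea : Q → C → Bool) (V : Q → Type) [∀ q, Fintype (V q)] [∀ q, DecidableEq (V q)]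
    [∀ q, Nonempty (V q)]
    (μ : ∀ c : C, (∀ q : {q : Q // mea q c}, V q.1) → ℝ)
    (hdist : ∀ c, IsDist (μ c))
    (hscc : ∀ (Q' : Finset Q) (c c' : C)
        (h : ∀ q ∈ Q', mea q c) (h' : ∀ q ∈ Q', mea q c'),
        margin (μ c) (fun x (q : {q : Q // q ∈ Q'}) => x ⟨q.1, h q.1 q.2⟩)
          = margin (μ c') (fun x (q : {q : Q // q ∈ Q'}) => x ⟨q.1, h' q.1 q.2⟩)) :
    (CbDNoncontextual mea V μ ↔
      ∃ S : (∀ q : Q, V q) → ℝ, IsDist S ∧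
        ∀ c : C, margin S (fun x (q : {q : Q // mea q c}) => x q.1) = μ c)
    ∧ (∀ (q : Q) (c c' : C) (h : mea q c) (h' : mea q c'),
        IsGreatest
          {r : ℝ | ∃ ν : V q × V q → ℝ, IsDist ν ∧
              margin ν Prod.fst = margin (μ c) (fun x => x ⟨q, h⟩) ∧
              margin ν Prod.snd = margin (μ c') (fun x => x ⟨q, h'⟩) ∧
              r = ∑ v : V q, ν (v, v)} 1)
    ∧ (∀ γ, IsCoupling mea V μ γ →
        (IsMultimaximal mea V μ γ ↔
          ∀ x, γ x ≠ 0 → ∀ (q : Q) (c c' : C) (h : mea q c) (h' : mea q c'),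
            x ⟨(q, c), h⟩ = x ⟨(q, c'), h'⟩)) := by
  replace hscc : StronglyConsistentlyConnected mea V μ := hscc
  have hmultimax : ∀ γ, IsCoupling mea V μ γ → (IsMultimaximal mea V μ γ ↔ _) :=
    fun γ hγ => hscc.isMultimaximal_iff hdist hγ.1
  refine ⟨⟨?_, ?_⟩, fun q c c' h h' => hscc.isGreatest_diagonal_mass hdist h h', hmultimax⟩
  · rintro ⟨γ, hγ, hγmax⟩
    exact ⟨_, hγ.isReducedCoupling_margin_readContents ((hmultimax γ hγ).mp hγmax)⟩
  · rintro ⟨S, hS⟩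
    have hγ := IsReducedCoupling.isCoupling_margin_copyContents (mea := mea) hS
    refine ⟨_, hγ, (hmultimax _ hγ).mpr fun x hx q c c' h h' => ?_⟩
    obtain ⟨y, rfl⟩ := exists_eq_of_margin_ne_zero hx
    rfl
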